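/- arXiv:2409.03486 — 2 statements merged into one kernel-verified Lean document; each statement's English description precedes it below -/
import Mathlib

section
/- If the period τ is even, then Q_{τ/2 + jτ} divides 2N for every integer j ≥ 0; in particular Q_{τ/2} divides 2N. -/
/-!
Let ξ_m = (P_m + √N)/Q_m and ξ'_m = (P_m - √N)/Q_m. Both satisfy (ξ_m - a_m) ξ_{m+1} = 1, and one
gets ξ_m > 1 and -1 < ξ'_{m+1} < 0, hence Q_m > 0 and 1 + 1/(2√N) < ξ_m < 2√N.

If a is τ-periodic from index 1, then ξ_{n+τ} - ξ_n is multiplied at each step by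
ξ_{n+1} ξ_{n+τ+1} > 1 + 1/(2√N) while staying bounded, so it vanishes: ξ, P and Q are τ-periodic.

Run backwards, the conjugate recursion reads a_m = ⌊-1/ξ'_{m+1}⌋ for m ≥ 1. Since
ξ'_{τ+1} = ξ'_1 = -1/(√N + a_0), this gives a_τ = 2 a_0 and ξ'_τ = a_0 - √N = -1/ξ_1, and then
inductively the palindromic symmetry ξ_{i+1} ξ'_{j+1} = -1 for i + j + 1 = τ. For τ = 2t it
says ξ_t + ξ'_t = a_t, i.e. 2 P_t = a_t Q_t, and then
2N = 2 Q_t Q_{t-1} + 2 P_t² = Q_t (2 Q_{t-1} + a_t P_t).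
-/

open Function Real

theorem eq_zero_of_bounded_of_mul_le_succ {d : ℕ → ℝ} {c B : ℝ} (hc : 1 < c) (h0 : 0 ≤ d 0)
    (hd : ∀ k, c * d k ≤ d (k + 1)) (hB : ∀ k, d k ≤ B) : d 0 = 0 := by
  have hpow : ∀ k, c ^ k * d 0 ≤ d k := by
    intro k
    induction k with
    | zero => simp
    | succ k ih =>
      calc c ^ (k + 1) * d 0 = c * (c ^ k * d 0) := by ring
        _ ≤ c * d k := by gcongr
        _ ≤ d (k + 1) := hd k
  by_contra hne
  have hpos : 0 < d 0 := h0.lt_of_ne' hne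
  obtain ⟨k, hk⟩ := pow_unbounded_of_one_lt (B / d 0) hc
  rw [div_lt_iff₀ hpos] at hk
  linarith [hpow k, hB k]

theorem Irrational.eq_of_add_div_eq_add_div {x : ℝ} (hx : Irrational x) {p q p' q' : ℤ}
    (hq : q ≠ 0) (hq' : q' ≠ 0) (h : (p + x) / q = (p' + x) / q') : p = p' ∧ q = q' := by
  have hqR : (q : ℝ) ≠ 0 := by exact_mod_cast hq
  rw [div_eq_div_iff hqR (by exact_mod_cast hq')] at h
  obtain rfl : q = q' := by
    by_contra hne
    refine (hx.mul_intCast (sub_ne_zero.mpr (Ne.symm hne))).ne_int (p' * q - p * q') ?_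
    push_cast
    linear_combination h
  have hp : (p : ℝ) = p' := by linarith [mul_right_cancel₀ hqR h]
  exact ⟨by exact_mod_cast hp, rfl⟩

noncomputable def completeQuot (P Q : ℕ → ℤ) (r : ℝ) (m : ℕ) : ℝ := (P m + r) / Q m

structure IsSqrtContFrac (N : ℕ) (a P Q : ℕ → ℤ) : Prop where
  not_isSquare : ¬ IsSquare N
  P_zero : P 0 = 0
  Q_zero : Q 0 = 1
  a_eq_floor : ∀ m, a m = ⌊((P m : ℝ) + √N) / Q m⌋
  P_succ : ∀ m, P (m + 1) = a m * Q m - P m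
  Q_succ_mul : ∀ m, Q (m + 1) * Q m = N - P (m + 1) ^ 2

namespace IsSqrtContFrac

variable {N : ℕ} {a P Q : ℕ → ℤ}

local notation "ξ" => completeQuot P Q √N
local notation "ξ'" => completeQuot P Q (-√N)

theorem irrational_sqrt (h : IsSqrtContFrac N a P Q) : Irrational √N :=
  irrational_sqrt_natCast_iff.mpr h.not_isSquare

theorem one_lt_sqrt (h : IsSqrtContFrac N a P Q) : 1 < √N := by
  have h0 : N ≠ 0 := by rintro rfl; exact h.not_isSquare ⟨0, rfl⟩
  have h1 : N ≠ 1 := by rintro rfl; exact h.not_isSquare ⟨1, rfl⟩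
  rw [Real.lt_sqrt zero_le_one]
  exact_mod_cast (show 1 < N by omega)

theorem Q_ne_zero (h : IsSqrtContFrac N a P Q) (m : ℕ) : Q m ≠ 0 := by
  cases m with
  | zero => simp [h.Q_zero]
  | succ m =>
    refine left_ne_zero_of_mul (a := Q (m + 1)) (b := Q m) ?_
    rw [h.Q_succ_mul, sub_ne_zero]
    rintro hN
    exact h.not_isSquare (Int.isSquare_natCast_iff.mp ⟨P (m + 1), by rw [hN, sq]⟩)

theorem completeQuot_sub_mul_succ (h : IsSqrtContFrac N a P Q) {r : ℝ} (hr : r ^ 2 = N)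
    (m : ℕ) : (completeQuot P Q r m - a m) * completeQuot P Q r (m + 1) = 1 := by
  have hq : (Q m : ℝ) ≠ 0 := by exact_mod_cast h.Q_ne_zero m
  have hq' : (Q (m + 1) : ℝ) ≠ 0 := by exact_mod_cast h.Q_ne_zero (m + 1)
  have hP : (P (m + 1) : ℝ) = a m * Q m - P m := by exact_mod_cast h.P_succ m
  have hQ : (Q (m + 1) : ℝ) * Q m = N - P (m + 1) ^ 2 := by exact_mod_cast h.Q_succ_mul m
  unfold completeQuot
  field_simp
  linear_combination hr - hQ + (P (m + 1) + r) * hP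

theorem xi_sub_mul_xi_succ (h : IsSqrtContFrac N a P Q) (m : ℕ) : (ξ m - a m) * ξ (m + 1) = 1 :=
  h.completeQuot_sub_mul_succ (sq_sqrt N.cast_nonneg) m

theorem xiConj_sub_mul_xiConj_succ (h : IsSqrtContFrac N a P Q) (m : ℕ) :
    (ξ' m - a m) * ξ' (m + 1) = 1 :=
  h.completeQuot_sub_mul_succ (by rw [neg_sq, sq_sqrt N.cast_nonneg]) m

theorem xi_zero (h : IsSqrtContFrac N a P Q) : ξ 0 = √N := by
  simp [completeQuot, h.P_zero, h.Q_zero]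

theorem xiConj_zero (h : IsSqrtContFrac N a P Q) : ξ' 0 = -√N := by
  simp [completeQuot, h.P_zero, h.Q_zero]

theorem a_zero (h : IsSqrtContFrac N a P Q) : a 0 = ⌊√N⌋ := by
  simpa [h.P_zero, h.Q_zero] using h.a_eq_floor 0

theorem a_lt_xi (h : IsSqrtContFrac N a P Q) (m : ℕ) : (a m : ℝ) < ξ m := by
  have hirr : Irrational (ξ m) := (h.irrational_sqrt.intCast_add _).div_intCast (h.Q_ne_zero m)
  rw [h.a_eq_floor]
  exact (Int.floor_le _).lt_of_ne (hirr.ne_int _).symm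

theorem xi_lt_a_add_one (h : IsSqrtContFrac N a P Q) (m : ℕ) : ξ m < a m + 1 := by
  rw [h.a_eq_floor]
  exact Int.lt_floor_add_one _

theorem one_lt_xi (h : IsSqrtContFrac N a P Q) (m : ℕ) : 1 < ξ m := by
  cases m with
  | zero => rw [h.xi_zero]; exact h.one_lt_sqrt
  | succ m =>
    have := h.xi_sub_mul_xi_succ m
    nlinarith [h.a_lt_xi m, h.xi_lt_a_add_one m]

theorem one_le_a (h : IsSqrtContFrac N a P Q) (m : ℕ) : 1 ≤ a m := by
  rw [h.a_eq_floor]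
  exact Int.le_floor.mpr (by exact_mod_cast (h.one_lt_xi m).le)

theorem xiConj_neg (h : IsSqrtContFrac N a P Q) (m : ℕ) : ξ' m < 0 := by
  induction m with
  | zero => rw [h.xiConj_zero]; linarith [h.one_lt_sqrt]
  | succ m ih =>
    have := h.xiConj_sub_mul_xiConj_succ m
    have : (1 : ℝ) ≤ a m := by exact_mod_cast h.one_le_a m
    nlinarith

theorem neg_one_lt_xiConj_succ (h : IsSqrtContFrac N a P Q) (m : ℕ) : -1 < ξ' (m + 1) := by
  have := h.xiConj_sub_mul_xiConj_succ m
  have : (1 : ℝ) ≤ a m := by exact_mod_cast h.one_le_a m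
  nlinarith [h.xiConj_neg m, h.xiConj_neg (m + 1)]

theorem xi_sub_xiConj (m : ℕ) : ξ m - ξ' m = 2 * √N / Q m := by
  unfold completeQuot
  ring

theorem Q_pos (h : IsSqrtContFrac N a P Q) (m : ℕ) : 0 < Q m := by
  have hs : 0 < 2 * √N := by linarith [h.one_lt_sqrt]
  have : 0 < 2 * √N / Q m := by
    rw [← xi_sub_xiConj]; linarith [h.one_lt_xi m, h.xiConj_neg m]
  exact_mod_cast (div_pos_iff_of_pos_left hs).mp this

theorem xi_lt_two_mul_sqrt (h : IsSqrtContFrac N a P Q) (m : ℕ) : ξ m < 2 * √N := by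
  have hQ : (1 : ℝ) ≤ Q m := by exact_mod_cast h.Q_pos m
  calc ξ m < ξ m - ξ' m := by linarith [h.xiConj_neg m]
    _ = 2 * √N / Q m := xi_sub_xiConj m
    _ ≤ 2 * √N := div_le_self (by linarith [h.one_lt_sqrt]) hQ

theorem one_add_inv_lt_xi (h : IsSqrtContFrac N a P Q) (m : ℕ) : 1 + (2 * √N)⁻¹ < ξ m := by
  have hξ : (ξ (m + 1))⁻¹ = ξ m - a m := inv_eq_of_mul_eq_one_left (h.xi_sub_mul_xi_succ m)
  have ha : (1 : ℝ) ≤ a m := by exact_mod_cast h.one_le_a m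
  have hinv : (2 * √N)⁻¹ < (ξ (m + 1))⁻¹ :=
    inv_strictAnti₀ (by linarith [h.one_lt_xi (m + 1)]) (h.xi_lt_two_mul_sqrt (m + 1))
  linarith

theorem a_succ_eq_floor (h : IsSqrtContFrac N a P Q) (m : ℕ) :
    a (m + 1) = ⌊-(ξ' (m + 2))⁻¹⌋ := by
  rw [inv_eq_of_mul_eq_one_left (h.xiConj_sub_mul_xiConj_succ (m + 1)), eq_comm, Int.floor_eq_iff]
  constructor <;> linarith [h.xiConj_neg (m + 1), h.neg_one_lt_xiConj_succ m]

theorem xiConj_eq_of_xi_mul_xiConj (h : IsSqrtContFrac N a P Q) {i j : ℕ}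
    (hij : ξ i * ξ' (j + 1) = -1) : ξ' j = a j - ξ i := by
  have hne : ξ' (j + 1) ≠ 0 := (h.xiConj_neg (j + 1)).ne
  have : (ξ' j - a j + ξ i) * ξ' (j + 1) = 0 := by
    linear_combination h.xiConj_sub_mul_xiConj_succ j + hij
  linarith [(mul_eq_zero.mp this).resolve_right hne]

section Periodic

variable {τ : ℕ}

theorem mul_abs_xi_sub_le (h : IsSqrtContFrac N a P Q) (hper : Periodic (fun n ↦ a (n + 1)) τ)
    (m : ℕ) : (1 + (2 * √N)⁻¹) * |ξ (m + τ + 1) - ξ (m + 1)| ≤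
      |ξ (m + 1 + τ + 1) - ξ (m + 1 + 1)| := by
  have h1 := h.xi_sub_mul_xi_succ (m + 1)
  have h2 := h.xi_sub_mul_xi_succ (m + τ + 1)
  rw [show a (m + τ + 1) = a (m + 1) from hper m,
    show m + τ + 1 + 1 = m + 1 + τ + 1 by ring] at h2
  set x := ξ (m + 1)
  set x' := ξ (m + τ + 1)
  set y := ξ (m + 1 + 1)
  set y' := ξ (m + 1 + τ + 1)
  have hy : 1 + (2 * √N)⁻¹ < y := h.one_add_inv_lt_xi _
  have hy' : 1 < y' := h.one_lt_xi _
  have hc : 0 < (2 * √N)⁻¹ := by have := h.one_lt_sqrt; positivity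
  have key : |x' - x| * (y * y') = |y' - y| := by
    rw [← abs_of_pos (mul_pos (by linarith) (by linarith) : 0 < y * y'), ← abs_mul,
      abs_sub_comm y']
    congr 1
    linear_combination y * h2 - y' * h1
  rw [← key, mul_comm]
  gcongr
  nlinarith

theorem xi_periodic (h : IsSqrtContFrac N a P Q) (hper : Periodic (fun n ↦ a (n + 1)) τ) :
    Periodic (fun n ↦ ξ (n + 1)) τ := by
  intro n
  have hbound : ∀ m, |ξ (m + τ + 1) - ξ (m + 1)| ≤ 2 * √N := fun m ↦ by
    rw [abs_le]
    constructor <;> linarith [h.one_lt_xi (m + 1), h.one_lt_xi (m + τ + 1),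
      h.xi_lt_two_mul_sqrt (m + 1), h.xi_lt_two_mul_sqrt (m + τ + 1)]
  have := eq_zero_of_bounded_of_mul_le_succ (d := fun k ↦ |ξ (n + k + τ + 1) - ξ (n + k + 1)|)
    (by simp [h.one_lt_sqrt.trans' zero_lt_one]) (abs_nonneg _)
    (fun k ↦ h.mul_abs_xi_sub_le hper (n + k)) (fun k ↦ hbound (n + k))
  simpa [sub_eq_zero] using this

theorem P_periodic_and_Q_periodic (h : IsSqrtContFrac N a P Q)
    (hper : Periodic (fun n ↦ a (n + 1)) τ) :
    Periodic (fun n ↦ P (n + 1)) τ ∧ Periodic (fun n ↦ Q (n + 1)) τ := by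
  have := fun n ↦ h.irrational_sqrt.eq_of_add_div_eq_add_div (h.Q_ne_zero _) (h.Q_ne_zero _)
    (h.xi_periodic hper n)
  exact ⟨fun n ↦ (this n).1, fun n ↦ (this n).2⟩

theorem xiConj_periodic (h : IsSqrtContFrac N a P Q) (hper : Periodic (fun n ↦ a (n + 1)) τ) :
    Periodic (fun n ↦ ξ' (n + 1)) τ := fun n ↦ by
  obtain ⟨hP, hQ⟩ := h.P_periodic_and_Q_periodic hper
  simp only [completeQuot, hP n, hQ n]

theorem xi_one_mul_xiConj (h : IsSqrtContFrac N a P Q) (hper : Periodic (fun n ↦ a (n + 1)) τ)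
    (hτ : 0 < τ) : ξ 1 * ξ' τ = -1 := by
  obtain ⟨k, rfl⟩ := Nat.exists_eq_add_one.mpr hτ
  have hξ'1 : ξ' (k + 2) = ξ' 1 := by simpa using h.xiConj_periodic hper 0
  have h0 := h.xi_sub_mul_xi_succ 0
  have h0' := h.xiConj_sub_mul_xiConj_succ 0
  rw [h.xi_zero, h.a_zero] at h0
  rw [h.xiConj_zero, h.a_zero] at h0'
  have hak : a (k + 1) = 2 * ⌊√N⌋ := by
    rw [h.a_succ_eq_floor, hξ'1, inv_eq_of_mul_eq_one_left h0', neg_sub, sub_neg_eq_add,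
      Int.floor_intCast_add]
    ring
  have hstep := h.xiConj_sub_mul_xiConj_succ (k + 1)
  rw [hak, hξ'1] at hstep
  have hne : ξ' 1 ≠ 0 := (h.xiConj_neg 1).ne
  have hk : ξ' (k + 1) = ⌊√N⌋ - √N := by
    have := mul_right_cancel₀ hne (hstep.trans h0'.symm)
    push_cast at this
    linarith
  rw [hk]
  linear_combination -h0

theorem xi_mul_xiConj_eq_neg_one (h : IsSqrtContFrac N a P Q)
    (hper : Periodic (fun n ↦ a (n + 1)) τ) (hτ : 0 < τ) :
    ∀ i j : ℕ, i + j + 1 = τ → ξ (i + 1) * ξ' (j + 1) = -1 := by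
  intro i
  induction i with
  | zero =>
    intro j hj
    obtain rfl : j + 1 = τ := by omega
    exact h.xi_one_mul_xiConj hper hτ
  | succ i ih =>
    intro j hij
    have hprev := ih (j + 1) (by omega)
    have ha : a (i + 1) = a (j + 1) := by
      have hne : ξ' (j + 1 + 1) ≠ 0 := (h.xiConj_neg _).ne
      have hξ : ξ (i + 1) = -(ξ' (j + 2))⁻¹ := by
        field_simp
        linear_combination hprev
      rw [h.a_eq_floor, h.a_succ_eq_floor, ← hξ]
      rfl
    rw [h.xiConj_eq_of_xi_mul_xiConj hprev, ← ha]
    linear_combination -h.xi_sub_mul_xi_succ (i + 1)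

theorem Q_dvd_two_mul (h : IsSqrtContFrac N a P Q) (hper : Periodic (fun n ↦ a (n + 1)) τ)
    {t : ℕ} (ht : 0 < t) (hτ : τ = t + t) (j : ℕ) : Q (t + j * τ) ∣ 2 * N := by
  obtain ⟨u, rfl⟩ := Nat.exists_eq_add_one.mpr ht
  have hQ : Q (u + 1 + j * τ) = Q (u + 1) := by
    simpa [add_right_comm] using (h.P_periodic_and_Q_periodic hper).2.nat_mul j u
  rw [hQ]
  have hsym := h.xi_mul_xiConj_eq_neg_one hper (by omega) u (u + 1) (by omega)
  have hsum : ξ (u + 1) + ξ' (u + 1) = a (u + 1) := by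
    linarith [h.xiConj_eq_of_xi_mul_xiConj hsym]
  have hQR : (Q (u + 1) : ℝ) ≠ 0 := by exact_mod_cast h.Q_ne_zero (u + 1)
  have h2P : 2 * P (u + 1) = a (u + 1) * Q (u + 1) := by
    unfold completeQuot at hsum
    field_simp at hsum
    exact_mod_cast (by linear_combination hsum : (2 * P (u + 1) : ℝ) = a (u + 1) * Q (u + 1))
  exact ⟨2 * Q u + a (u + 1) * P (u + 1),
    by linear_combination -2 * h.Q_succ_mul u + P (u + 1) * h2P⟩

end Periodic

end IsSqrtContFrac

theorem stmt_8_general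
    (N : ℕ) (hNsq : ¬ IsSquare N)
    (a P Q : ℤ → ℤ)
    (hP0 : P 0 = 0) (hQ0 : Q 0 = 1)
    (ha : ∀ m : ℤ, 0 ≤ m → a m = ⌊((P m : ℝ) + Real.sqrt N) / (Q m : ℝ)⌋)
    (hPrec : ∀ m : ℤ, 0 ≤ m → P (m + 1) = a m * Q m - P m)
    (hQrec : ∀ m : ℤ, 0 ≤ m → Q (m + 1) * Q m = (N : ℤ) - P (m + 1) ^ 2)
    (τ : ℕ) (hτ : 0 < τ)
    (hper : ∀ n : ℤ, 1 ≤ n → a (n + τ) = a n)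
    (hτeven : Even τ)
    :
    ∀ j : ℕ, Q (((τ / 2 : ℕ) : ℤ) + (j : ℤ) * (τ : ℤ)) ∣ 2 * (N : ℤ) := by
  have h : IsSqrtContFrac N (fun m ↦ a m) (fun m ↦ P m) (fun m ↦ Q m) :=
    { not_isSquare := hNsq
      P_zero := hP0
      Q_zero := hQ0
      a_eq_floor := fun m ↦ ha m m.cast_nonneg
      P_succ := fun m ↦ by simpa using hPrec m m.cast_nonneg
      Q_succ_mul := fun m ↦ by simpa using hQrec m m.cast_nonneg }
  have hper' : Periodic (fun n : ℕ ↦ a ↑(n + 1)) τ := fun n ↦ by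
    simpa [add_right_comm] using hper (n + 1) (by omega)
  obtain ⟨t, rfl⟩ := hτeven
  intro j
  rw [show (t + t) / 2 = t by omega]
  simpa using h.Q_dvd_two_mul hper' (by omega) rfl j

theorem stmt_8
    (N : ℕ) (hN : 0 < N) (hNsq : ¬ IsSquare N)
    (a P Q : ℤ → ℤ)
    (hP0 : P 0 = 0) (hQ0 : Q 0 = 1)
    (ha : ∀ m : ℤ, 0 ≤ m → a m = ⌊((P m : ℝ) + Real.sqrt N) / (Q m : ℝ)⌋)
    (hPrec : ∀ m : ℤ, 0 ≤ m → P (m + 1) = a m * Q m - P m)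
    (hQrec : ∀ m : ℤ, 0 ≤ m → Q (m + 1) * Q m = (N : ℤ) - P (m + 1) ^ 2)
    (τ : ℕ) (hτ : 0 < τ)
    (hper : ∀ n : ℤ, 1 ≤ n → a (n + τ) = a n)
    (hmin : ∀ τ' : ℕ, 0 < τ' → (∀ n : ℤ, 1 ≤ n → a (n + τ') = a n) → τ ≤ τ')
    (hτeven : Even τ)
    :
    ∀ j : ℕ, Q (((τ / 2 : ℕ) : ℤ) + (j : ℤ) * (τ : ℤ)) ∣ 2 * (N : ℤ) :=
  stmt_8_general N hNsq a P Q hP0 hQ0 ha hPrec hQrec τ hτ hper hτeven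
end

section
/- Suppose the period τ is even. Then ∏_{m=0}^{τ−1} (√N + P_{m+1})/Q_{m+1} = p_{τ−1} + q_{τ−1}√N. Consequently, setting γ = ∏_{m=0}^{τ−1} (√N + P_{m+1}) and γ̄ = ∏_{m=0}^{τ−1} (−√N + P_{m+1}), one has γ/γ̄ = (p_{τ−1} + q_{τ−1}√N)². -/
/-!
Write `x_m(r) = (r + P_m) / Q_m` for `r = ±√N`. The recursion gives `(x_m(r) - a_m) x_{m+1}(r) = 1`,
so the products of complete quotients telescope against the convergents:
`(∏_{m<n} x_{m+1}(r)) (q_{n-1} r - p_{n-1}) = (-1)^(n+1)` and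
`∏_{m<n} x_{m+1}(√N) x_{m+1}(-√N) = (-1)^n / Q_n`. Since the `x_m(√N)` are bounded and the
difference of two continued-fraction tails with the same partial quotients grows geometrically,
periodicity of `a` forces `Q_τ = 1`. For even `τ` the two products `A`, `B` over a period then
satisfy `A B = 1` and `B (p_{τ-1} + q_{τ-1} √N) = 1`, so `A = p_{τ-1} + q_{τ-1} √N` and
`γ / γ̄ = A / B = A²`.
-/

open Finset

theorem Irrational.eq_of_add_intCast_div_eq {s : ℝ} (hs : Irrational s) {p q p' q' : ℤ}
    (hq : q ≠ 0) (hq' : q' ≠ 0) (h : (s + p) / q = (s + p') / q') : p = p' ∧ q = q' := by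
  rw [div_eq_div_iff (by exact_mod_cast hq) (by exact_mod_cast hq')] at h
  have hqq : q = q' := by
    by_contra hne
    have hrat : s * ((q' - q : ℤ) : ℝ) = ((p' * q - p * q' : ℤ) : ℝ) := by
      push_cast
      linear_combination h
    exact Int.not_irrational _ (hrat ▸ hs.mul_intCast (sub_ne_zero.mpr (Ne.symm hne)))
  subst hqq
  have hpp : (p : ℝ) = p' := by linarith [mul_right_cancel₀ (by exact_mod_cast hq) h]
  exact ⟨by exact_mod_cast hpp, rfl⟩

theorem one_lt_sqrt_of_not_isSquare {N : ℕ} (hN : ¬ IsSquare N) : 1 < √(N : ℝ) := by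
  have h0 : N ≠ 0 := by rintro rfl; exact hN ⟨0, rfl⟩
  have h1 : N ≠ 1 := by rintro rfl; exact hN ⟨1, rfl⟩
  have h2 : (2 : ℝ) ≤ N := by exact_mod_cast (by omega : 2 ≤ N)
  rw [Real.lt_sqrt zero_le_one]
  linarith

-- Each step multiplies `|x n - y n|` by `x (n + 1) * y (n + 1) ≥ 1 + B⁻¹`, yet it stays below `B`.
theorem eq_of_forall_eq_add_inv {a x y : ℕ → ℝ} {B : ℝ} (ha : ∀ n, 1 ≤ a n)
    (hx : ∀ n, x n = a n + (x (n + 1))⁻¹) (hy : ∀ n, y n = a n + (y (n + 1))⁻¹)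
    (hx0 : ∀ n, 0 < x n) (hy0 : ∀ n, 0 < y n) (hxB : ∀ n, x n ≤ B) (hyB : ∀ n, y n ≤ B) :
    x 0 = y 0 := by
  have hB : 0 < B := (hx0 0).trans_le (hxB 0)
  have hge {z : ℕ → ℝ} (hz : ∀ n, z n = a n + (z (n + 1))⁻¹) (hz0 : ∀ n, 0 < z n)
      (hzB : ∀ n, z n ≤ B) (n : ℕ) : 1 + B⁻¹ ≤ z n := by
    rw [hz n]
    gcongr
    exacts [ha n, hz0 _, hzB _]
  have hgrow : ∀ n, (1 + B⁻¹) ^ n * |x 0 - y 0| ≤ |x n - y n| := by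
    intro n
    induction n with
    | zero => simp
    | succ n ih =>
      have hxy : |x n - y n| * (x (n + 1) * y (n + 1)) = |x (n + 1) - y (n + 1)| := by
        rw [hx n, hy n, add_sub_add_left_eq_sub, inv_sub_inv (hx0 _).ne' (hy0 _).ne', abs_div,
          abs_of_pos (mul_pos (hx0 _) (hy0 _)), abs_sub_comm,
          div_mul_cancel₀ _ (mul_pos (hx0 _) (hy0 _)).ne']
      rw [← hxy, pow_succ, mul_right_comm]
      have h1 : 1 + B⁻¹ ≤ x (n + 1) * y (n + 1) := by
        nlinarith [hge hx hx0 hxB (n + 1), hge hy hy0 hyB (n + 1), inv_pos.mpr hB]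
      gcongr
  by_contra hne
  have hd : 0 < |x 0 - y 0| := abs_pos.mpr (sub_ne_zero.mpr hne)
  obtain ⟨n, hn⟩ := pow_unbounded_of_one_lt (B / |x 0 - y 0|)
    (lt_add_of_pos_right 1 (inv_pos.mpr hB))
  have hlt : |x n - y n| < B := by
    rw [abs_sub_lt_iff]; constructor <;> linarith [hx0 n, hy0 n, hxB n, hyB n]
  have := (div_lt_iff₀ hd).mp hn
  linarith [hgrow n]

-- For `r = √N` this is the tail `[a m; a (m + 1), …]` of the expansion of `√N`, for `r = -√N`
-- its conjugate.
noncomputable def completeQuotient (r : ℝ) (P Q : ℤ → ℤ) (m : ℤ) : ℝ := (r + P m) / Q m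

structure IsSqrtCFExpansion (N : ℕ) (a P Q : ℤ → ℤ) : Prop where
  P_zero : P 0 = 0
  Q_zero : Q 0 = 1
  a_eq_floor : ∀ m : ℤ, 0 ≤ m → a m = ⌊((P m : ℝ) + √N) / Q m⌋
  P_succ : ∀ m : ℤ, 0 ≤ m → P (m + 1) = a m * Q m - P m
  Q_succ_mul : ∀ m : ℤ, 0 ≤ m → Q (m + 1) * Q m = N - P (m + 1) ^ 2

structure IsConvergents (a p q : ℤ → ℤ) : Prop where
  p_neg_one : p (-1) = 1
  p_zero : p 0 = a 0
  q_neg_one : q (-1) = 0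
  q_zero : q 0 = 1
  p_rec : ∀ m : ℤ, 1 ≤ m → p m = a m * p (m - 1) + p (m - 2)
  q_rec : ∀ m : ℤ, 1 ≤ m → q m = a m * q (m - 1) + q (m - 2)

namespace IsSqrtCFExpansion

variable {N : ℕ} {a P Q : ℤ → ℤ}

theorem completeQuotient_zero (h : IsSqrtCFExpansion N a P Q) (r : ℝ) :
    completeQuotient r P Q 0 = r := by
  simp [completeQuotient, h.P_zero, h.Q_zero]

theorem a_eq_floor_completeQuotient (h : IsSqrtCFExpansion N a P Q) {m : ℤ} (hm : 0 ≤ m) :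
    a m = ⌊completeQuotient √N P Q m⌋ := by
  rw [h.a_eq_floor m hm, completeQuotient, add_comm]

theorem Q_succ_mul_real (h : IsSqrtCFExpansion N a P Q) {r : ℝ} (hr : r ^ 2 = N) {m : ℤ}
    (hm : 0 ≤ m) : (Q (m + 1) : ℝ) * Q m = r ^ 2 - P (m + 1) ^ 2 := by
  rw [hr]
  exact_mod_cast h.Q_succ_mul m hm

theorem completeQuotient_sub_mul_completeQuotient_succ (h : IsSqrtCFExpansion N a P Q) {r : ℝ}
    (hr : r ^ 2 = N) {m : ℤ} (hm : 0 ≤ m) (hQm : Q m ≠ 0) (hQm' : Q (m + 1) ≠ 0) :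
    (completeQuotient r P Q m - a m) * completeQuotient r P Q (m + 1) = 1 := by
  have hP : (P (m + 1) : ℝ) = a m * Q m - P m := by exact_mod_cast h.P_succ m hm
  unfold completeQuotient
  field_simp
  linear_combination (r + P (m + 1)) * hP - h.Q_succ_mul_real hr hm

theorem bounds_succ (h : IsSqrtCFExpansion N a P Q) (hN : ¬ IsSquare N) {m : ℤ} (hm : 0 ≤ m)
    (hQ : 0 < Q m) (hP : (P m : ℝ) < √N) (hQP : (Q m : ℝ) < √N + P m) :
    0 < Q (m + 1) ∧ (P (m + 1) : ℝ) < √N ∧ (Q (m + 1) : ℝ) < √N + P (m + 1) := by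
  have hQR : (0 : ℝ) < Q m := by exact_mod_cast hQ
  set x := completeQuotient √N P Q m with hx
  have hirr : Irrational x :=
    ((irrational_sqrt_natCast_iff.mpr hN).add_intCast (P m)).div_intCast hQ.ne'
  have hfract : √N - P (m + 1) = Q m * Int.fract x := by
    rw [Int.fract, ← h.a_eq_floor_completeQuotient hm, h.P_succ m hm, hx, completeQuotient]
    push_cast
    field_simp
    ring
  have hfract_pos : 0 < Int.fract x := Int.fract_pos.mpr (hirr.ne_int _)
  have ha : (0 : ℝ) ≤ a m := by
    rw [h.a_eq_floor_completeQuotient hm]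
    exact_mod_cast Int.floor_nonneg.mpr (div_pos (by linarith) hQR).le
  have hP' : (P (m + 1) : ℝ) = a m * Q m - P m := by exact_mod_cast h.P_succ m hm
  have hlo : 0 < √N - P (m + 1) := hfract ▸ mul_pos hQR hfract_pos
  have hhi : √N - P (m + 1) < Q m :=
    hfract ▸ mul_lt_of_lt_one_right hQR (Int.fract_lt_one x)
  have hplus : 0 < √N + P (m + 1) := by nlinarith
  have hmul := h.Q_succ_mul_real (Real.sq_sqrt (Nat.cast_nonneg N)) hm
  have hQ'R : (0 : ℝ) < Q (m + 1) := by
    refine pos_of_mul_pos_left ?_ hQR.le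
    nlinarith
  refine ⟨by exact_mod_cast hQ'R, by linarith, ?_⟩
  refine lt_of_mul_lt_mul_right ?_ hQR.le
  nlinarith

theorem bounds (h : IsSqrtCFExpansion N a P Q) (hN : ¬ IsSquare N) {m : ℤ} (hm : 0 ≤ m) :
    0 < Q m ∧ (P m : ℝ) < √N ∧ (Q m : ℝ) < √N + P m := by
  induction m, hm using Int.leInduction with
  | base =>
    have := one_lt_sqrt_of_not_isSquare hN
    rw [h.P_zero, h.Q_zero]
    refine ⟨one_pos, ?_, ?_⟩ <;> push_cast <;> linarith
  | succ m hm ih => exact h.bounds_succ hN hm ih.1 ih.2.1 ih.2.2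

theorem Q_pos (h : IsSqrtCFExpansion N a P Q) (hN : ¬ IsSquare N) {m : ℤ} (hm : 0 ≤ m) :
    0 < Q m :=
  (h.bounds hN hm).1

theorem one_lt_completeQuotient (h : IsSqrtCFExpansion N a P Q) (hN : ¬ IsSquare N) {m : ℤ}
    (hm : 0 ≤ m) : 1 < completeQuotient √N P Q m := by
  obtain ⟨hQ, -, hQP⟩ := h.bounds hN hm
  exact (one_lt_div (by exact_mod_cast hQ)).mpr hQP

theorem completeQuotient_le (h : IsSqrtCFExpansion N a P Q) (hN : ¬ IsSquare N) {m : ℤ}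
    (hm : 0 ≤ m) : completeQuotient √N P Q m ≤ 2 * √N := by
  obtain ⟨hQ, hP, hQP⟩ := h.bounds hN hm
  have hQ1 : (1 : ℝ) ≤ Q m := by exact_mod_cast hQ
  calc completeQuotient √N P Q m ≤ √N + P m := div_le_self (by linarith) hQ1
    _ ≤ 2 * √N := by linarith

theorem one_le_a (h : IsSqrtCFExpansion N a P Q) (hN : ¬ IsSquare N) {m : ℤ} (hm : 0 ≤ m) :
    1 ≤ a m := by
  rw [h.a_eq_floor_completeQuotient hm]
  exact Int.le_floor.mpr (by exact_mod_cast (h.one_lt_completeQuotient hN hm).le)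

theorem completeQuotient_eq_add_inv (h : IsSqrtCFExpansion N a P Q) (hN : ¬ IsSquare N) {m : ℤ}
    (hm : 0 ≤ m) :
    completeQuotient √N P Q m = a m + (completeQuotient √N P Q (m + 1))⁻¹ := by
  rw [← eq_inv_of_mul_eq_one_left (h.completeQuotient_sub_mul_completeQuotient_succ
    (Real.sq_sqrt (Nat.cast_nonneg N)) hm (h.Q_pos hN hm).ne' (h.Q_pos hN (by omega)).ne')]
  ring

-- Equal partial quotients from index `1` on give equal complete quotients at `1` and `1 + τ`,
-- hence `P (1 + τ) = P 1` and `Q (1 + τ) = Q 1` by irrationality, and then `Q τ = Q 0`.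
theorem Q_eq_one_of_periodic (h : IsSqrtCFExpansion N a P Q) (hN : ¬ IsSquare N) {τ : ℕ}
    (hper : ∀ n : ℤ, 1 ≤ n → a (n + τ) = a n) : Q τ = 1 := by
  have hcq : completeQuotient √N P Q 1 = completeQuotient √N P Q (1 + τ) := by
    refine eq_of_forall_eq_add_inv (a := fun n : ℕ => (a (n + 1) : ℝ))
      (x := fun n : ℕ => completeQuotient √N P Q (n + 1))
      (y := fun n : ℕ => completeQuotient √N P Q (n + 1 + τ)) (B := 2 * √N)
      (fun n => by exact_mod_cast h.one_le_a hN (by omega)) (fun n => ?_) (fun n => ?_)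
      (fun n => ?_) (fun n => ?_) (fun n => h.completeQuotient_le hN (by omega))
      (fun n => h.completeQuotient_le hN (by omega)) |>.trans (by simp [add_comm])
    · simpa using h.completeQuotient_eq_add_inv hN (m := n + 1) (by omega)
    · have := h.completeQuotient_eq_add_inv hN (m := n + 1 + τ) (by omega)
      rw [hper _ (by omega)] at this
      rwa [show ((n + 1 : ℕ) : ℤ) + 1 + τ = n + 1 + τ + 1 by push_cast; ring]
    · exact zero_lt_one.trans (h.one_lt_completeQuotient hN (by omega))
    · exact zero_lt_one.trans (h.one_lt_completeQuotient hN (by omega))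
  obtain ⟨hP, hQ⟩ := (irrational_sqrt_natCast_iff.mpr hN).eq_of_add_intCast_div_eq
    (h.Q_pos hN zero_le_one).ne' (h.Q_pos hN (by omega)).ne' hcq
  have h0 := h.Q_succ_mul 0 le_rfl
  have hτ := h.Q_succ_mul τ (by omega)
  rw [add_comm, ← hP, ← hQ] at hτ
  rw [h.Q_zero, zero_add] at h0
  exact mul_left_cancel₀ (h.Q_pos hN zero_le_one).ne' (by linarith)

theorem completeQuotient_succ_mul_convergent_sub (h : IsSqrtCFExpansion N a P Q)
    {p q : ℤ → ℤ} (hc : IsConvergents a p q) (hQ : ∀ m, 0 ≤ m → Q m ≠ 0) {r : ℝ}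
    (hr : r ^ 2 = N) {m : ℤ} (hm : 0 ≤ m) :
    completeQuotient r P Q (m + 1) * (q m * r - p m) = -(q (m - 1) * r - p (m - 1)) := by
  induction m, hm using Int.leInduction with
  | base =>
    have := h.completeQuotient_sub_mul_completeQuotient_succ hr le_rfl (hQ 0 le_rfl)
      (hQ 1 zero_le_one)
    rw [h.completeQuotient_zero, zero_add] at this
    simp only [zero_sub, hc.p_zero, hc.q_zero, hc.p_neg_one, hc.q_neg_one]
    push_cast
    linear_combination this
  | succ m hm ih =>
    have hstep := h.completeQuotient_sub_mul_completeQuotient_succ hr (m := m + 1) (by omega)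
      (hQ _ (by omega)) (hQ _ (by omega))
    have hp : (p (m + 1) : ℝ) = a (m + 1) * p m + p (m - 1) := by
      rw [hc.p_rec _ (by omega)]; push_cast; ring_nf
    have hq : (q (m + 1) : ℝ) = a (m + 1) * q m + q (m - 1) := by
      rw [hc.q_rec _ (by omega)]; push_cast; ring_nf
    rw [hp, hq, add_sub_cancel_right]
    linear_combination completeQuotient r P Q (m + 1 + 1) * ih - (q m * r - p m) * hstep

theorem prod_completeQuotient_mul_convergent_sub (h : IsSqrtCFExpansion N a P Q)
    {p q : ℤ → ℤ} (hc : IsConvergents a p q) (hQ : ∀ m, 0 ≤ m → Q m ≠ 0) {r : ℝ}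
    (hr : r ^ 2 = N) (n : ℕ) :
    (∏ m ∈ range n, completeQuotient r P Q (m + 1)) * (q (n - 1) * r - p (n - 1))
      = (-1) ^ (n + 1) := by
  induction n with
  | zero => simp [hc.p_neg_one, hc.q_neg_one]
  | succ n ih =>
    rw [prod_range_succ, pow_succ, ← ih, Nat.cast_succ, add_sub_cancel_right, mul_assoc,
      h.completeQuotient_succ_mul_convergent_sub hc hQ hr (Nat.cast_nonneg n)]
    ring

theorem prod_completeQuotient_mul_completeQuotient_neg (h : IsSqrtCFExpansion N a P Q)
    (hQ : ∀ m, 0 ≤ m → Q m ≠ 0) {r : ℝ} (hr : r ^ 2 = N) (n : ℕ) :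
    (∏ m ∈ range n, completeQuotient r P Q (m + 1) * completeQuotient (-r) P Q (m + 1)) * Q n
      = (-1) ^ n := by
  induction n with
  | zero => simp [h.Q_zero]
  | succ n ih =>
    have hfac : completeQuotient r P Q (n + 1) * completeQuotient (-r) P Q (n + 1) * Q (n + 1)
        = -Q n := by
      have hQn : (Q (n + 1) : ℝ) ≠ 0 := by exact_mod_cast hQ _ (by omega)
      unfold completeQuotient
      field_simp
      linear_combination h.Q_succ_mul_real hr (Nat.cast_nonneg n)
    rw [prod_range_succ, mul_assoc, Nat.cast_succ, hfac, pow_succ, ← ih]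
    ring

end IsSqrtCFExpansion

theorem stmt_12_general
    (N : ℕ) (hNsq : ¬ IsSquare N)
    (a P Q : ℤ → ℤ)
    (hP0 : P 0 = 0) (hQ0 : Q 0 = 1)
    (ha : ∀ m : ℤ, 0 ≤ m → a m = ⌊((P m : ℝ) + Real.sqrt N) / (Q m : ℝ)⌋)
    (hPrec : ∀ m : ℤ, 0 ≤ m → P (m + 1) = a m * Q m - P m)
    (hQrec : ∀ m : ℤ, 0 ≤ m → Q (m + 1) * Q m = (N : ℤ) - P (m + 1) ^ 2)
    (τ : ℕ)
    (hper : ∀ n : ℤ, 1 ≤ n → a (n + τ) = a n)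
    (p q : ℤ → ℤ)
    (hp1 : p (-1) = 1) (hp0 : p 0 = a 0)
    (hq1 : q (-1) = 0) (hq0 : q 0 = 1)
    (hprec : ∀ m : ℤ, 1 ≤ m → p m = a m * p (m - 1) + p (m - 2))
    (hqrec : ∀ m : ℤ, 1 ≤ m → q m = a m * q (m - 1) + q (m - 2))
    (hτeven : Even τ)
    :
    (∏ m ∈ Finset.range τ,
        (Real.sqrt N + (P ((m : ℤ) + 1) : ℝ)) / (Q ((m : ℤ) + 1) : ℝ))
        = (p ((τ : ℤ) - 1) : ℝ) + (q ((τ : ℤ) - 1) : ℝ) * Real.sqrt N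
      ∧ (∏ m ∈ Finset.range τ, (Real.sqrt N + (P ((m : ℤ) + 1) : ℝ)))
          / (∏ m ∈ Finset.range τ, (-Real.sqrt N + (P ((m : ℤ) + 1) : ℝ)))
        = ((p ((τ : ℤ) - 1) : ℝ) + (q ((τ : ℤ) - 1) : ℝ) * Real.sqrt N) ^ 2 := by
  have h : IsSqrtCFExpansion N a P Q := ⟨hP0, hQ0, ha, hPrec, hQrec⟩
  have hc : IsConvergents a p q := ⟨hp1, hp0, hq1, hq0, hprec, hqrec⟩
  have hQ (m : ℤ) (hm : 0 ≤ m) : Q m ≠ 0 := (h.Q_pos hNsq hm).ne'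
  have hs : √(N : ℝ) ^ 2 = N := Real.sq_sqrt (Nat.cast_nonneg N)
  set A := ∏ m ∈ range τ, completeQuotient √N P Q (m + 1)
  set B := ∏ m ∈ range τ, completeQuotient (-√N) P Q (m + 1)
  have hAB : A * B = 1 := by
    have := h.prod_completeQuotient_mul_completeQuotient_neg hQ hs τ
    rwa [prod_mul_distrib, h.Q_eq_one_of_periodic hNsq hper, Int.cast_one, mul_one,
      hτeven.neg_one_pow] at this
  have hB : B * (p (τ - 1) + q (τ - 1) * √N) = 1 := by
    have := h.prod_completeQuotient_mul_convergent_sub hc hQ (r := -√N) (by rwa [neg_sq]) τ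
    rw [pow_succ, hτeven.neg_one_pow] at this
    linear_combination -this
  have hA : A = p (τ - 1) + q (τ - 1) * √N := by
    linear_combination (p (τ - 1) + q (τ - 1) * √N) * hAB - A * hB
  refine ⟨hA, ?_⟩
  have hQprod : ∏ m ∈ range τ, (Q ((m : ℤ) + 1) : ℝ) ≠ 0 :=
    prod_ne_zero_iff.mpr fun m _ => by exact_mod_cast hQ _ (by omega)
  rw [← div_div_div_cancel_right₀ hQprod, ← prod_div_distrib, ← prod_div_distrib]
  change A / B = _
  rw [← hA, eq_inv_of_mul_eq_one_right hAB, div_inv_eq_mul, sq]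

theorem stmt_12
    (N : ℕ) (hN : 0 < N) (hNsq : ¬ IsSquare N)
    (a P Q : ℤ → ℤ)
    (hP0 : P 0 = 0) (hQ0 : Q 0 = 1)
    (ha : ∀ m : ℤ, 0 ≤ m → a m = ⌊((P m : ℝ) + Real.sqrt N) / (Q m : ℝ)⌋)
    (hPrec : ∀ m : ℤ, 0 ≤ m → P (m + 1) = a m * Q m - P m)
    (hQrec : ∀ m : ℤ, 0 ≤ m → Q (m + 1) * Q m = (N : ℤ) - P (m + 1) ^ 2)
    (τ : ℕ) (hτ : 0 < τ)
    (hper : ∀ n : ℤ, 1 ≤ n → a (n + τ) = a n)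
    (hmin : ∀ τ' : ℕ, 0 < τ' → (∀ n : ℤ, 1 ≤ n → a (n + τ') = a n) → τ ≤ τ')
    (p q : ℤ → ℤ)
    (hp1 : p (-1) = 1) (hp0 : p 0 = a 0)
    (hq1 : q (-1) = 0) (hq0 : q 0 = 1)
    (hprec : ∀ m : ℤ, 1 ≤ m → p m = a m * p (m - 1) + p (m - 2))
    (hqrec : ∀ m : ℤ, 1 ≤ m → q m = a m * q (m - 1) + q (m - 2))
    (hτeven : Even τ)
    :
    (∏ m ∈ Finset.range τ,
        (Real.sqrt N + (P ((m : ℤ) + 1) : ℝ)) / (Q ((m : ℤ) + 1) : ℝ))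
        = (p ((τ : ℤ) - 1) : ℝ) + (q ((τ : ℤ) - 1) : ℝ) * Real.sqrt N
      ∧ (∏ m ∈ Finset.range τ, (Real.sqrt N + (P ((m : ℤ) + 1) : ℝ)))
          / (∏ m ∈ Finset.range τ, (-Real.sqrt N + (P ((m : ℤ) + 1) : ℝ)))
        = ((p ((τ : ℤ) - 1) : ℝ) + (q ((τ : ℤ) - 1) : ℝ) * Real.sqrt N) ^ 2 :=
  stmt_12_general N hNsq a P Q hP0 hQ0 ha hPrec hQrec τ hper p q hp1 hp0 hq1 hq0 hprec hqrec hτeven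
end
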